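/- Suppose that X is a Fréchet sequence space over ℤ in which the sequence (e_n)_{n∈ℤ} of canonical vectors is a basis, that (‖·‖_k)_{k∈ℕ} is an increasing sequence of seminorms inducing the topology of X, and that the bilateral forward shift F is an invertible operator on X. Then the following assertions are equivalent: (i) F : X → X is topologically expansive; (ii) there exists k ∈ ℕ such that sup_{n∈ℕ} ‖e_n‖_k = ∞ or sup_{n∈ℕ} ‖e_{−n}‖_k = ∞; (iii) F : X → X is topologically positively expansive or F⁻¹ : X → X is topologically positively expansive. -/

import Mathlib

/-! The coordinate projections `x ↦ x_m e_m` are pointwise bounded, since the terms of the basis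
expansion of `x` tend to zero, so by Banach–Steinhaus on the Fréchet space they are equicontinuous:
`|x_m| ‖e_m‖_k ≤ C ‖x‖_{k'}`. If `‖e_n‖_k` is unbounded for `n → ∞`, the shift `Fᴺ` moves a nonzero
coordinate `x_j` to positions `n = j + N` where `‖e_n‖_k` is large, and the inequality makes
`‖Fᴺ x‖_{k'}` large. Conversely `Fⁿ e_0 = e_n`, so the orbit of `e_0` witnesses (i) ⇒ (ii) and
(iii) ⇒ (ii), while (iii) ⇒ (i) holds for any invertible operator. -/

open Filter Topology Set

/-- An invertible operator `T` is topologically expansive: for each nonzero `x` there is `k`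
with `sup_{n∈ℤ} ‖Tⁿ x‖_k = ∞`. -/
def TopologicallyExpansiveSeq {𝕂 : Type*} [RCLike 𝕂] {E : Type*} [AddCommGroup E] [Module 𝕂 E]
    [TopologicalSpace E] [IsTopologicalAddGroup E]
    (p : ℕ → Seminorm 𝕂 E) (T : E ≃L[𝕂] E) : Prop :=
  ∀ x : E, x ≠ 0 → ∃ k : ℕ, ∀ R : ℝ, ∃ n : ℤ, R < p k ((T ^ n) x)

/-- An operator `T` is topologically positively expansive: for each nonzero `x` there is `k`
with `sup_{n∈ℕ} ‖Tⁿ x‖_k = ∞`. -/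
def TopologicallyPositivelyExpansiveSeq {𝕂 : Type*} [RCLike 𝕂] {E : Type*} [AddCommGroup E]
    [Module 𝕂 E] (p : ℕ → Seminorm 𝕂 E) (T : E → E) : Prop :=
  ∀ x : E, x ≠ 0 → ∃ k : ℕ, ∀ R : ℝ, ∃ n : ℕ, 1 ≤ n ∧ R < p k (T^[n] x)

theorem completeSpace_of_forall_sub_mem_nhds_zero {G : Type*} [UniformSpace G] [AddCommGroup G]
    [IsUniformAddGroup G] [(uniformity G).IsCountablyGenerated]
    (h : ∀ u : ℕ → G, (∀ V ∈ 𝓝 (0 : G), ∃ n₀ : ℕ, ∀ m ≥ n₀, ∀ n ≥ n₀, u n - u m ∈ V) →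
      ∃ x : G, Tendsto u atTop (𝓝 x)) :
    CompleteSpace G := by
  refine UniformSpace.complete_of_cauchySeq_tendsto fun u hu => h u fun V hV => ?_
  have hV' : {q : G × G | q.2 - q.1 ∈ V} ∈ uniformity G := by
    rw [uniformity_eq_comap_nhds_zero G]
    exact preimage_mem_comap hV
  exact cauchySeq_iff.mp hu _ hV'

theorem WithSeminorms.exists_seminorm_bound_of_bddAbove {𝕂 E F α ι κ : Type*}
    [NontriviallyNormedField 𝕂] [AddCommGroup E] [Module 𝕂 E] [UniformSpace E] [IsUniformAddGroup E]
    [ContinuousSMul 𝕂 E] [BarrelledSpace 𝕂 E]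
    [AddCommGroup F] [Module 𝕂 F] [UniformSpace F] [IsUniformAddGroup F]
    [Preorder ι] [IsDirectedOrder ι] [Nonempty ι]
    {p : ι → Seminorm 𝕂 E} (hp : WithSeminorms p) (hmono : Monotone p)
    {q : κ → Seminorm 𝕂 F} (hq : WithSeminorms q) {P : α → E →L[𝕂] F}
    (hP : ∀ k x, BddAbove (range fun i => q k (P i x))) (k : κ) :
    ∃ (k' : ι) (C : ℝ), 0 < C ∧ ∀ i x, q k (P i x) ≤ C * p k' x := by
  obtain ⟨r, hr, hrP⟩ := (hq.uniformEquicontinuous_iff_exists_continuous_seminorm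
    (fun i => (P i).toLinearMap)).mp (hq.banach_steinhaus hP) k
  obtain ⟨s, C, hC, hrC⟩ := Seminorm.bound_of_continuous hp r hr
  obtain ⟨k', hk'⟩ := s.exists_le
  refine ⟨k', C, NNReal.coe_pos.mpr (pos_iff_ne_zero.mpr hC), fun i x => ?_⟩
  calc q k (P i x) ≤ r x := hrP i x
    _ ≤ C * s.sup p x := hrC x
    _ ≤ C * p k' x := by
      gcongr
      exact Finset.sup_le (fun j hj => hmono (hk' j hj)) x

theorem tendsto_cofinite_zero_of_tendsto_sum_Icc {G : Type*} [AddCommGroup G] [TopologicalSpace G]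
    [IsTopologicalAddGroup G] {f : ℤ → G} {x : G}
    (h : Tendsto (fun mn : ℕ × ℕ => ∑ j ∈ Finset.Icc (-(mn.1 : ℤ)) (mn.2 : ℤ), f j) atTop (𝓝 x)) :
    Tendsto f cofinite (𝓝 0) := by
  set S := fun mn : ℕ × ℕ => ∑ j ∈ Finset.Icc (-(mn.1 : ℤ)) (mn.2 : ℤ), f j
  have hS : ∀ a b : ℕ → ℕ, Tendsto a atTop atTop → Tendsto b atTop atTop →
      Tendsto (fun n => S (a n, b n)) atTop (𝓝 x) := fun a b ha hb =>
    h.comp (prod_atTop_atTop_eq (α := ℕ) (β := ℕ) ▸ ha.prodMk hb)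
  have hdiff : ∀ a b : ℕ → ℕ, Tendsto a atTop atTop → Tendsto b atTop atTop →
      Tendsto (fun n => S (a n, b n) - S (n, n)) atTop (𝓝 0) := fun a b ha hb => by
    simpa using (hS a b ha hb).sub (hS id id tendsto_id tendsto_id)
  have hright : ∀ n : ℕ, S (n, n + 1) - S (n, n) = f ((n : ℤ) + 1) := fun n => by
    simp only [S, Nat.cast_add_one,
      ← Finset.insert_Icc_right_eq_Icc_add_one (by omega : -(n : ℤ) ≤ n + 1)]
    rw [Finset.sum_insert (by simp), add_sub_cancel_right]
  have hleft : ∀ n : ℕ, S (n + 1, n) - S (n, n) = f (-(n : ℤ) - 1) := fun n => by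
    simp only [S, Nat.cast_add_one, neg_add',
      ← Finset.insert_Icc_left_eq_Icc_sub_one (by omega : -(n : ℤ) - 1 ≤ n)]
    rw [Finset.sum_insert (by simp), add_sub_cancel_right]
  rw [Int.cofinite_eq, tendsto_sup, ← map_neg_atTop, ← Nat.map_cast_int_atTop, map_map,
    tendsto_map'_iff, tendsto_map'_iff]
  constructor <;> rw [← tendsto_add_atTop_iff_nat 1]
  · simpa [hleft, sub_eq_add_neg, add_comm] using
      hdiff (· + 1) id (tendsto_add_atTop_nat 1) tendsto_id
  · simpa [hright] using hdiff id (· + 1) tendsto_id (tendsto_add_atTop_nat 1)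

theorem exists_norm_coord_mul_seminorm_basis_le {𝕂 E : Type*} [NontriviallyNormedField 𝕂]
    [AddCommGroup E] [Module 𝕂 E] [TopologicalSpace E] [IsTopologicalAddGroup E]
    [ContinuousSMul 𝕂 E]
    (ι : E →ₗ[𝕂] (ℤ → 𝕂)) (hι_cont : ∀ j : ℤ, Continuous fun x : E => ι x j)
    {p : ℕ → Seminorm 𝕂 E} (hp : WithSeminorms p) (hmono : Monotone p)
    (hcomplete : ∀ u : ℕ → E,
      (∀ V ∈ 𝓝 (0 : E), ∃ n₀ : ℕ, ∀ m ≥ n₀, ∀ n ≥ n₀, u n - u m ∈ V) →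
      ∃ x : E, Tendsto u atTop (𝓝 x))
    (e : ℤ → E)
    (hbasis : ∀ x : E, Tendsto
      (fun mn : ℕ × ℕ => ∑ j ∈ Finset.Icc (-(mn.1 : ℤ)) (mn.2 : ℤ), ι x j • e j)
      atTop (𝓝 x)) (k : ℕ) :
    ∃ (k' : ℕ) (C : ℝ), 0 < C ∧ ∀ (m : ℤ) (y : E), ‖ι y m‖ * p k (e m) ≤ C * p k' y := by
  -- complete and metrizable, `E` is a Baire space, hence barrelled, as Banach–Steinhaus needs
  let := IsTopologicalAddGroup.rightUniformSpace E
  have := isUniformAddGroup_of_addCommGroup (G := E)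
  have := hp.firstCountableTopology
  have := IsUniformAddGroup.uniformity_countably_generated (α := E)
  have := completeSpace_of_forall_sub_mem_nhds_zero hcomplete
  let P : ℤ → E →L[𝕂] E := fun m =>
    (⟨LinearMap.proj m ∘ₗ ι, hι_cont m⟩ : E →L[𝕂] 𝕂).smulRight (e m)
  have hbdd : ∀ i y, BddAbove (range fun m => p i (P m y)) := fun i y => by
    have := ((hp.continuous_seminorm i).tendsto 0).comp
      (tendsto_cofinite_zero_of_tendsto_sum_Icc (hbasis y))
    rw [map_zero] at this
    exact this.bddAbove_range_of_cofinite
  obtain ⟨k', C, hC, hPC⟩ := hp.exists_seminorm_bound_of_bddAbove hmono hp hbdd k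
  exact ⟨k', C, hC, fun m y => (map_smul_eq_mul _ _ _).symm.trans_le (hPC m y)⟩

theorem exists_ge_lt_of_forall_exists_lt {u : ℕ → ℝ} (h : ∀ R : ℝ, ∃ n : ℕ, 1 ≤ n ∧ R < u n)
    (N : ℕ) (R : ℝ) : ∃ n : ℕ, N ≤ n ∧ R < u n := by
  obtain ⟨M, hM⟩ := ((Set.finite_lt_nat N).image u).bddAbove
  obtain ⟨n, -, hn⟩ := h (max R M)
  refine ⟨n, le_of_not_gt fun hnN => ?_, (le_max_left R M).trans_lt hn⟩
  exact (hM (mem_image_of_mem u hnN)).not_gt ((le_max_right R M).trans_lt hn)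

theorem ContinuousLinearEquiv.zpow_natCast_apply {R M : Type*} [Semiring R] [AddCommMonoid M]
    [Module R M] [TopologicalSpace M] (T : M ≃L[R] M) (n : ℕ) (x : M) :
    (T ^ (n : ℤ)) x = T^[n] x := by
  rw [zpow_natCast]
  induction n with
  | zero => rfl
  | succ n ih => rw [pow_succ', Function.iterate_succ_apply', ← ih]; rfl

theorem ContinuousLinearEquiv.zpow_neg_natCast_apply {R M : Type*} [Semiring R] [AddCommMonoid M]
    [Module R M] [TopologicalSpace M] (T : M ≃L[R] M) (n : ℕ) (x : M) :
    (T ^ (-(n : ℤ))) x = T.symm^[n] x := by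
  rw [zpow_neg, ← inv_zpow, ContinuousLinearEquiv.zpow_natCast_apply]
  rfl

section Shift

variable {𝕂 E : Type*} [RCLike 𝕂] [AddCommGroup E] [Module 𝕂 E] {ι : E →ₗ[𝕂] (ℤ → 𝕂)}
  {F : E → E} {e : ℤ → E}

theorem shift_iterate_apply (hF : ∀ (x : E) (n : ℤ), ι (F x) n = ι x (n - 1)) (n : ℕ) (x : E)
    (j : ℤ) : ι (F^[n] x) j = ι x (j - n) := by
  induction n generalizing j with
  | zero => simp
  | succ n ih => rw [Function.iterate_succ_apply', hF, ih]; push_cast; ring_nf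

theorem shift_iterate_basis_zero (hι : Function.Injective ι)
    (he : ∀ n j : ℤ, ι (e n) j = if j = n then 1 else 0)
    (hF : ∀ (x : E) (n : ℤ), ι (F x) n = ι x (n - 1)) (n : ℕ) :
    F^[n] (e 0) = e n :=
  hι <| funext fun j => by simp only [shift_iterate_apply hF, he, sub_eq_zero]

theorem positivelyExpansive_shift_of_unbounded (hι : Function.Injective ι)
    (hF : ∀ (x : E) (n : ℤ), ι (F x) n = ι x (n - 1)) (p : ℕ → Seminorm 𝕂 E)
    (hbound : ∀ k : ℕ, ∃ (k' : ℕ) (C : ℝ), 0 < C ∧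
      ∀ (m : ℤ) (y : E), ‖ι y m‖ * p k (e m) ≤ C * p k' y)
    {k : ℕ} (hk : ∀ R : ℝ, ∃ n : ℕ, 1 ≤ n ∧ R < p k (e n)) :
    TopologicallyPositivelyExpansiveSeq p F := by
  intro x hx
  obtain ⟨j, hj⟩ := Function.ne_iff.mp ((map_ne_zero_iff ι hι).mpr hx)
  have hc : 0 < ‖ι x j‖ := norm_pos_iff.mpr hj
  obtain ⟨k', C, hC, hCk'⟩ := hbound k
  refine ⟨k', fun R => ?_⟩
  obtain ⟨n, hjn, hn⟩ := exists_ge_lt_of_forall_exists_lt hk (j.toNat + 1) (R * C / ‖ι x j‖)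
  obtain ⟨N, hN⟩ : ∃ N : ℕ, (N : ℤ) = n - j := ⟨(n - j).toNat, Int.toNat_of_nonneg (by omega)⟩
  refine ⟨N, by omega, lt_of_mul_lt_mul_left ?_ hC.le⟩
  calc C * R = ‖ι x j‖ * (R * C / ‖ι x j‖) := by field_simp
    _ < ‖ι x j‖ * p k (e n) := by gcongr
    _ ≤ C * p k' (F^[N] x) := by
      simpa [shift_iterate_apply hF, hN] using hCk' n (F^[N] x)

theorem basis_ne_zero (he : ∀ n j : ℤ, ι (e n) j = if j = n then 1 else 0) (n : ℤ) : e n ≠ 0 :=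
  fun h => by simpa [h] using he n n

theorem positivelyExpansive_shift_iff (hι : Function.Injective ι)
    (he : ∀ n j : ℤ, ι (e n) j = if j = n then 1 else 0)
    (hF : ∀ (x : E) (n : ℤ), ι (F x) n = ι x (n - 1)) (p : ℕ → Seminorm 𝕂 E)
    (hbound : ∀ k : ℕ, ∃ (k' : ℕ) (C : ℝ), 0 < C ∧
      ∀ (m : ℤ) (y : E), ‖ι y m‖ * p k (e m) ≤ C * p k' y) :
    TopologicallyPositivelyExpansiveSeq p F ↔ ∃ k : ℕ, ∀ R : ℝ, ∃ n : ℕ, 1 ≤ n ∧ R < p k (e n) := by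
  refine ⟨fun h => ?_, fun ⟨k, hk⟩ => positivelyExpansive_shift_of_unbounded hι hF p hbound hk⟩
  obtain ⟨k, hk⟩ := h (e 0) (basis_ne_zero he 0)
  exact ⟨k, by simpa only [shift_iterate_basis_zero hι he hF] using hk⟩

variable [TopologicalSpace E]

theorem shift_symm_iterate_basis_zero (F : E ≃L[𝕂] E) (hι : Function.Injective ι)
    (he : ∀ n j : ℤ, ι (e n) j = if j = n then 1 else 0)
    (hF : ∀ (x : E) (n : ℤ), ι (F x) n = ι x (n - 1)) (n : ℕ) :
    F.symm^[n] (e 0) = e (-n) := by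
  have : F^[n] (e (-n)) = e 0 :=
    hι <| funext fun j => by simp only [shift_iterate_apply hF, he, sub_eq_neg_self]
  rw [← this, Function.LeftInverse.iterate F.symm_apply_apply n]

theorem positivelyExpansive_shift_symm_iff (F : E ≃L[𝕂] E) (hι : Function.Injective ι)
    (he : ∀ n j : ℤ, ι (e n) j = if j = n then 1 else 0)
    (hF : ∀ (x : E) (n : ℤ), ι (F x) n = ι x (n - 1)) (p : ℕ → Seminorm 𝕂 E)
    (hbound : ∀ k : ℕ, ∃ (k' : ℕ) (C : ℝ), 0 < C ∧
      ∀ (m : ℤ) (y : E), ‖ι y m‖ * p k (e m) ≤ C * p k' y) :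
    TopologicallyPositivelyExpansiveSeq p F.symm ↔
      ∃ k : ℕ, ∀ R : ℝ, ∃ n : ℕ, 1 ≤ n ∧ R < p k (e (-n)) := by
  -- `F⁻¹` is the forward shift for the reflected coordinates `j ↦ x_{-j}` and basis `n ↦ e_{-n}`
  refine positivelyExpansive_shift_iff (ι := LinearMap.funLeft 𝕂 𝕂 Neg.neg ∘ₗ ι) (e := e ∘ Neg.neg)
    ((LinearMap.funLeft_injective_of_surjective 𝕂 𝕂 _ neg_surjective).comp hι) ?_ ?_ p ?_
  · intro n j
    simp [he]
  · intro x n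
    simpa [sub_eq_add_neg, add_comm] using (hF (F.symm x) (1 - n)).symm
  · intro k
    obtain ⟨k', C, hC, hCk'⟩ := hbound k
    exact ⟨k', C, hC, fun m y => hCk' (-m) y⟩

end Shift

section Expansive

variable {𝕂 E : Type*} [RCLike 𝕂] [AddCommGroup E] [Module 𝕂 E] [TopologicalSpace E]
  [IsTopologicalAddGroup E] {p : ℕ → Seminorm 𝕂 E} {T : E ≃L[𝕂] E}

theorem TopologicallyExpansiveSeq.of_positivelyExpansive
    (h : TopologicallyPositivelyExpansiveSeq p T ∨ TopologicallyPositivelyExpansiveSeq p T.symm) :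
    TopologicallyExpansiveSeq p T := by
  intro x hx
  rcases h with h | h <;> obtain ⟨k, hk⟩ := h x hx <;> refine ⟨k, fun R => ?_⟩ <;>
    obtain ⟨n, -, hn⟩ := hk R
  · exact ⟨n, by rwa [T.zpow_natCast_apply]⟩
  · exact ⟨-n, by rwa [T.zpow_neg_natCast_apply]⟩

theorem TopologicallyExpansiveSeq.exists_unbounded_orbit (h : TopologicallyExpansiveSeq p T)
    {x : E} (hx : x ≠ 0) :
    ∃ k : ℕ, (∀ R : ℝ, ∃ n : ℕ, 1 ≤ n ∧ R < p k (T^[n] x)) ∨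
      (∀ R : ℝ, ∃ n : ℕ, 1 ≤ n ∧ R < p k (T.symm^[n] x)) := by
  obtain ⟨k, hk⟩ := h x hx
  refine ⟨k, ?_⟩
  by_contra! ⟨⟨R₁, h₁⟩, ⟨R₂, h₂⟩⟩
  obtain ⟨n, hn⟩ := hk (max (max R₁ R₂) (p k x))
  have hR := le_max_left (max R₁ R₂) (p k x)
  obtain ⟨m, rfl | rfl⟩ := Int.eq_nat_or_neg n
  · rw [T.zpow_natCast_apply] at hn
    rcases m.eq_zero_or_pos with rfl | hm
    · exact hn.not_ge (le_max_right _ _)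
    · linarith [h₁ m hm, le_max_left R₁ R₂]
  · rw [T.zpow_neg_natCast_apply] at hn
    rcases m.eq_zero_or_pos with rfl | hm
    · exact hn.not_ge (le_max_right _ _)
    · linarith [h₂ m hm, le_max_right R₁ R₂]

end Expansive

theorem bilateralShift_topologicallyExpansive_iff_general
    {𝕂 : Type*} [RCLike 𝕂] {E : Type*} [AddCommGroup E] [Module 𝕂 E]
    [TopologicalSpace E] [IsTopologicalAddGroup E] [ContinuousSMul 𝕂 E]
    (ι : E →ₗ[𝕂] (ℤ → 𝕂)) (hι_inj : Function.Injective ι)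
    (hι_cont : ∀ j : ℤ, Continuous fun x : E => ι x j)
    (p : ℕ → Seminorm 𝕂 E) (hp : WithSeminorms p) (hmono : Monotone p)
    (hcomplete : ∀ u : ℕ → E,
      (∀ V ∈ 𝓝 (0 : E), ∃ n₀ : ℕ, ∀ m ≥ n₀, ∀ n ≥ n₀, u n - u m ∈ V) →
      ∃ x : E, Tendsto u atTop (𝓝 x))
    (e : ℤ → E) (he : ∀ n j : ℤ, ι (e n) j = if j = n then 1 else 0)
    (hbasis : ∀ x : E, Tendsto
      (fun mn : ℕ × ℕ => ∑ j ∈ Finset.Icc (-(mn.1 : ℤ)) (mn.2 : ℤ), ι x j • e j)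
      atTop (𝓝 x))
    (F : E ≃L[𝕂] E) (hF : ∀ (x : E) (n : ℤ), ι (F x) n = ι x (n - 1)) :
    (TopologicallyExpansiveSeq p F ↔
      ∃ k : ℕ, (∀ R : ℝ, ∃ n : ℕ, 1 ≤ n ∧ R < p k (e (n : ℤ))) ∨
        (∀ R : ℝ, ∃ n : ℕ, 1 ≤ n ∧ R < p k (e (-(n : ℤ))))) ∧
    ((∃ k : ℕ, (∀ R : ℝ, ∃ n : ℕ, 1 ≤ n ∧ R < p k (e (n : ℤ))) ∨
        (∀ R : ℝ, ∃ n : ℕ, 1 ≤ n ∧ R < p k (e (-(n : ℤ))))) ↔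
      (TopologicallyPositivelyExpansiveSeq p (⇑F) ∨
        TopologicallyPositivelyExpansiveSeq p (⇑F.symm))) := by
  have hbound := exists_norm_coord_mul_seminorm_basis_le ι hι_cont hp hmono hcomplete e hbasis
  have hii_iii : (∃ k : ℕ, (∀ R : ℝ, ∃ n : ℕ, 1 ≤ n ∧ R < p k (e (n : ℤ))) ∨
        (∀ R : ℝ, ∃ n : ℕ, 1 ≤ n ∧ R < p k (e (-(n : ℤ))))) ↔
      (TopologicallyPositivelyExpansiveSeq p (⇑F) ∨
        TopologicallyPositivelyExpansiveSeq p (⇑F.symm)) := by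
    rw [positivelyExpansive_shift_iff hι_inj he hF p hbound,
      positivelyExpansive_shift_symm_iff F hι_inj he hF p hbound, exists_or]
  refine ⟨⟨fun h => ?_, fun h => .of_positivelyExpansive (hii_iii.mp h)⟩, hii_iii⟩
  obtain ⟨k, hk⟩ := h.exists_unbounded_orbit (basis_ne_zero he 0)
  exact ⟨k, by simpa only [shift_iterate_basis_zero hι_inj he hF,
    shift_symm_iterate_basis_zero F hι_inj he hF] using hk⟩

/-- Let `X` be a Fréchet sequence space over `ℤ` (realized by a continuous-in-each-coordinate
injective linear embedding `ι : X → 𝕂^ℤ`, with a complete metrizable locally convex topology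
induced by the increasing sequence of seminorms `p`), in which the canonical vectors `(e_n)`
form a basis, and suppose the bilateral forward shift `F` is an invertible operator on `X`.
Then the following are equivalent: (i) `F` is topologically expansive; (ii) there is `k` with
`sup_n ‖e_n‖_k = ∞` or `sup_n ‖e_{−n}‖_k = ∞`; (iii) `F` or `F⁻¹` is topologically positively
expansive. -/
theorem bilateralShift_topologicallyExpansive_iff
    {𝕂 : Type*} [RCLike 𝕂] {E : Type*} [AddCommGroup E] [Module 𝕂 E]
    [TopologicalSpace E] [IsTopologicalAddGroup E] [ContinuousSMul 𝕂 E] [T2Space E]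
    (ι : E →ₗ[𝕂] (ℤ → 𝕂)) (hι_inj : Function.Injective ι)
    (hι_cont : ∀ j : ℤ, Continuous fun x : E => ι x j)
    (p : ℕ → Seminorm 𝕂 E) (hp : WithSeminorms p) (hmono : Monotone p)
    (hcomplete : ∀ u : ℕ → E,
      (∀ V ∈ 𝓝 (0 : E), ∃ n₀ : ℕ, ∀ m ≥ n₀, ∀ n ≥ n₀, u n - u m ∈ V) →
      ∃ x : E, Tendsto u atTop (𝓝 x))
    (e : ℤ → E) (he : ∀ n j : ℤ, ι (e n) j = if j = n then 1 else 0)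
    (hbasis : ∀ x : E, Tendsto
      (fun mn : ℕ × ℕ => ∑ j ∈ Finset.Icc (-(mn.1 : ℤ)) (mn.2 : ℤ), ι x j • e j)
      atTop (𝓝 x))
    (F : E ≃L[𝕂] E) (hF : ∀ (x : E) (n : ℤ), ι (F x) n = ι x (n - 1)) :
    (TopologicallyExpansiveSeq p F ↔
      ∃ k : ℕ, (∀ R : ℝ, ∃ n : ℕ, 1 ≤ n ∧ R < p k (e (n : ℤ))) ∨
        (∀ R : ℝ, ∃ n : ℕ, 1 ≤ n ∧ R < p k (e (-(n : ℤ))))) ∧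
    ((∃ k : ℕ, (∀ R : ℝ, ∃ n : ℕ, 1 ≤ n ∧ R < p k (e (n : ℤ))) ∨
        (∀ R : ℝ, ∃ n : ℕ, 1 ≤ n ∧ R < p k (e (-(n : ℤ))))) ↔
      (TopologicallyPositivelyExpansiveSeq p (⇑F) ∨
        TopologicallyPositivelyExpansiveSeq p (⇑F.symm))) :=
  bilateralShift_topologicallyExpansive_iff_general ι hι_inj hι_cont p hp hmono hcomplete e he
    hbasis F hF
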